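/- arXiv:2105.07551 — 2 statements merged into one kernel-verified Lean document; each statement's English description precedes it below -/
import Mathlib

section
/- Let G be a 4-connected planar triangulation and let S be an independent set of vertices of degree at most 6 in G such that, for every u in S with deg(u) in {5, 6}, no two degree-4 neighbors of u are adjacent in G. If S saturates no 4-cycle in G, then for any two distinct vertices u1, u2 in S, the edge sets of the induced subgraphs G[N[u1]] and G[N[u2]] are disjoint. -/
open SimpleGraph

variable {V : Type}

/-- The degree of a vertex, as the cardinality of its neighbour set. -/
noncomputable def vdeg (G : SimpleGraph V) (v : V) : ℕ := (G.neighborSet v).ncard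

/-- A graph is `k`-connected if it has more than `k` vertices and remains connected
whenever fewer than `k` vertices are removed. -/
def KConnected [Fintype V] (k : ℕ) (G : SimpleGraph V) : Prop :=
  k < Fintype.card V ∧
    ∀ S : Finset V, S.card < k → (G.induce ((↑S : Set V)ᶜ)).Connected

/-- `S` is an independent set of vertices. -/
def IndepSet (G : SimpleGraph V) (S : Set V) : Prop :=
  ∀ ⦃a⦄, a ∈ S → ∀ ⦃b⦄, b ∈ S → ¬ G.Adj a b

/-- `H` is a minor of `G` (branch-set definition). -/
def HasMinor {W : Type} (G : SimpleGraph V) (H : SimpleGraph W) : Prop :=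
  ∃ f : W → Set V,
    (∀ w, (f w).Nonempty) ∧
    (∀ w, (G.induce (f w)).Connected) ∧
    (∀ w₁ w₂, w₁ ≠ w₂ → Disjoint (f w₁) (f w₂)) ∧
    (∀ w₁ w₂, H.Adj w₁ w₂ → ∃ v₁ ∈ f w₁, ∃ v₂ ∈ f w₂, G.Adj v₁ v₂)

/-- Planarity, via Wagner's characterization: no `K₅` and no `K₃,₃` minor. -/
def IsPlanar (G : SimpleGraph V) : Prop :=
  ¬ HasMinor G (⊤ : SimpleGraph (Fin 5)) ∧
    ¬ HasMinor G (completeBipartiteGraph (Fin 3) (Fin 3))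

/-- Outerplanarity: no `K₄` and no `K₂,₃` minor. -/
def IsOuterplanarGraph {W : Type} (H : SimpleGraph W) : Prop :=
  ¬ HasMinor H (⊤ : SimpleGraph (Fin 4)) ∧
    ¬ HasMinor H (completeBipartiteGraph (Fin 2) (Fin 3))

/-- A planar triangulation: an edge-maximal planar graph on at least 3 vertices,
equivalently a planar graph with `3n - 6` edges. -/
def IsPlanarTriangulation [Fintype V] (G : SimpleGraph V) : Prop :=
  3 ≤ Fintype.card V ∧ IsPlanar G ∧
    (G.edgeSet.ncard : ℤ) = 3 * (Fintype.card V : ℤ) - 6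

/-- `p` is a Hamiltonian path of the subgraph of `G` induced on the vertex set `A`:
a path in `G` whose support is exactly `A`. -/
def IsHamPathOn (G : SimpleGraph V) (A : Set V) {a b : V} (p : G.Walk a b) : Prop :=
  p.IsPath ∧ ∀ x, x ∈ p.support ↔ x ∈ A

/-- There are at least two Hamiltonian paths between `a` and `b` in the subgraph of `G`
induced on the vertex set `A`. -/
def TwoHamPathsOn (G : SimpleGraph V) (A : Set V) (a b : V) : Prop :=
  ∃ p q : G.Walk a b, IsHamPathOn G A p ∧ IsHamPathOn G A q ∧ p ≠ q

/-- The number of (distinct, i.e. with distinct edge sets) Hamiltonian cycles of `G`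
containing all edges of `E₀`. -/
noncomputable def hamCycleCountThrough (G : SimpleGraph V) (E₀ : Set (Sym2 V)) : ℕ :=
  {E : Set (Sym2 V) | ∃ (v : V) (c : G.Walk v v), c.IsCycle ∧ (∀ x, x ∈ c.support) ∧
    (∀ e ∈ E₀, e ∈ c.edges) ∧ E = {e | e ∈ c.edges}}.ncard

/-- The number of Hamiltonian cycles of `G`. -/
noncomputable def hamCycleCount (G : SimpleGraph V) : ℕ := hamCycleCountThrough G ∅

/-- The distance between `x` and `y` in `G` is at least `k`
(every walk from `x` to `y` has length at least `k`). -/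
def DistAtLeast (G : SimpleGraph V) (x y : V) (k : ℕ) : Prop :=
  ∀ p : G.Walk x y, k ≤ p.length

/-- The link `A_u` of a vertex `u` of degree at most 6: if `deg u = 4`, the set of
edges of `G` with both ends in `N(u)`; if `deg u ∈ {5,6}`, the set of edges `e`
incident with `u` such that `G - e` is 4-connected. -/
def link [Fintype V] (G : SimpleGraph V) (u : V) : Set (Sym2 V) :=
  {e | e ∈ G.edgeSet ∧
    ((vdeg G u = 4 ∧ ∀ v ∈ e, v ∈ G.neighborSet u) ∨
     (vdeg G u ≠ 4 ∧ u ∈ e ∧ KConnected 4 (G.deleteEdges {e})))}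

/-- `S` saturates some `k`-cycle of `G`: there is a `k`-cycle `C` with `|S ∩ V(C)| = 2`. -/
def Saturates (G : SimpleGraph V) (S : Set V) (k : ℕ) : Prop :=
  ∃ (v : V) (c : G.Walk v v), c.IsCycle ∧ c.length = k ∧
    (S ∩ {x | x ∈ c.support}).ncard = 2

/-- `S` saturates some diamond-6-cycle of `G`: there is a subgraph of `G` isomorphic to
the diamond-6-cycle (crucial vertices `x i`, `y i`, hub vertices `k i`) such that `S`
contains three of its crucial vertices. -/
def SaturatesDiamond6 (G : SimpleGraph V) (S : Set V) : Prop :=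
  ∃ x y k : Fin 3 → V,
    List.Nodup [x 0, y 0, x 1, y 1, x 2, y 2, k 0, k 1, k 2] ∧
    (∀ i, G.Adj (x i) (y i)) ∧
    (∀ i, G.Adj (x i) (k i) ∧ G.Adj (y i) (k i) ∧
          G.Adj (x i) (k (i + 1)) ∧ G.Adj (y i) (k (i + 1))) ∧
    3 ≤ (S ∩ ({x 0, y 0, x 1, y 1, x 2, y 2} : Set V)).ncard

/-- `G` has a separating triangle: a 3-cycle whose vertex deletion disconnects `G`. -/
def HasSeparatingTriangle (G : SimpleGraph V) : Prop :=
  ∃ a b c : V, G.Adj a b ∧ G.Adj b c ∧ G.Adj a c ∧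
    ¬ (G.induce {v | v ≠ a ∧ v ≠ b ∧ v ≠ c}).Connected

/-- A combinatorial plane graph: a graph together with a type of faces, a distinguished
(outer, i.e. infinite) face, and incidence relations of vertices and edges with faces. -/
structure PlaneGraph (V : Type) where
  graph : SimpleGraph V
  Face : Type
  outer : Face
  vertexOn : V → Face → Prop
  edgeOn : Sym2 V → Face → Prop
  edgeOn_mem : ∀ e f, edgeOn e f → e ∈ graph.edgeSet
  vertexOn_of_edgeOn : ∀ e f, edgeOn e f → ∀ v, v ∈ e → vertexOn v f

/-- A vertex `y` and an edge `e` are cofacial: incident with a common face. -/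
def PlaneGraph.Cofacial (P : PlaneGraph V) (y : V) (e : Sym2 V) : Prop :=
  ∃ f, P.vertexOn y f ∧ P.edgeOn e f

/-- The face `f` is bounded by a triangle. -/
def PlaneGraph.IsTriFace (P : PlaneGraph V) (f : P.Face) : Prop :=
  ∃ a b c : V, a ≠ b ∧ a ≠ c ∧ b ≠ c ∧
    P.graph.Adj a b ∧ P.graph.Adj b c ∧ P.graph.Adj a c ∧
    (∀ v, P.vertexOn v f ↔ v = a ∨ v = b ∨ v = c) ∧
    (∀ e, P.edgeOn e f ↔ e = s(a, b) ∨ e = s(b, c) ∨ e = s(a, c))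

/-- A near triangulation: every face except possibly the outer one is a triangle. -/
def PlaneGraph.IsNearTriangulation (P : PlaneGraph V) : Prop :=
  ∀ f, f ≠ P.outer → P.IsTriFace f

/-- The outer face of `P` is bounded by the 4-cycle `u v w x u`. -/
def PlaneGraph.OuterCycle4 (P : PlaneGraph V) (u v w x : V) : Prop :=
  [u, v, w, x].Nodup ∧
  P.graph.Adj u v ∧ P.graph.Adj v w ∧ P.graph.Adj w x ∧ P.graph.Adj x u ∧
  (∀ y, P.vertexOn y P.outer ↔ y = u ∨ y = v ∨ y = w ∨ y = x) ∧
  (∀ e, P.edgeOn e P.outer ↔ e = s(u, v) ∨ e = s(v, w) ∨ e = s(w, x) ∨ e = s(x, u))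

/-- `H` is a cycle (as a graph): it has a Hamiltonian cycle using all of its edges. -/
def IsCycleGraph {W : Type} (H : SimpleGraph W) : Prop :=
  ∃ (v : W) (c : H.Walk v v), c.IsCycle ∧ (∀ x, x ∈ c.support) ∧
    ∀ e ∈ H.edgeSet, e ∈ c.edges

/-- The subgraph of `G` on the vertex set `B` (kept on the ambient vertex type;
vertices outside `B` become isolated). -/
def restrictTo (G : SimpleGraph V) (B : Set V) : SimpleGraph V where
  Adj a b := a ∈ B ∧ b ∈ B ∧ G.Adj a b
  symm := ⟨fun _ _ h => ⟨h.2.1, h.1, h.2.2.symm⟩⟩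
  loopless := ⟨fun a h => G.loopless.irrefl a h.2.2⟩

/-- The graph obtained from `G` by contracting the set `A` to the single vertex `z`
(with `z ∈ A` serving as the new vertex; the other vertices of `A` become isolated). -/
def contractSetTo (G : SimpleGraph V) (A : Set V) (z : V) : SimpleGraph V :=
  SimpleGraph.fromRel (fun a b =>
    (a ∉ A ∧ b ∉ A ∧ G.Adj a b) ∨
    (a = z ∧ b ∉ A ∧ ∃ w ∈ A, G.Adj w b))

/-- `c` is a separating 4-cycle of `G` and `A` is the vertex set of its interior:
`Vclosure(c) = V(c) ∪ A`. -/
def IsSeparating4CycleWithInside (G : SimpleGraph V) {v : V} (c : G.Walk v v) (A : Set V)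
    : Prop :=
  c.IsCycle ∧ c.length = 4 ∧
  A.Nonempty ∧ (∀ a ∈ A, a ∉ c.support) ∧
  (G.induce A).Connected ∧
  (∀ a ∈ A, ∀ b, G.Adj a b → b ∈ A ∨ b ∈ c.support) ∧
  {x | x ∉ A ∧ x ∉ c.support}.Nonempty

/-- The alternative conclusion of Lemma 4.2 for a graph `H` with relevant vertex set `W`,
outer 4-cycle vertex set `C` and contracted vertex `z`: either (i) for all distinct
`a, b ∈ C`, `H - (C \ {a,b})` has at least two Hamiltonian `a`–`b` paths, or (ii) there are
distinct `a, b ∈ C` for which there is a unique such path `P`, and for every other pair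
`c, d ∈ C` there are at least two Hamiltonian `c`–`d` paths, each avoiding an edge of `P`
incident with `z`. -/
def TwoPathOrUnique (H : SimpleGraph V) (C W : Set V) (z : V) : Prop :=
  (∀ a b : V, a ∈ C → b ∈ C → a ≠ b → TwoHamPathsOn H (W \ (C \ {a, b})) a b) ∨
  (∃ a b : V, a ∈ C ∧ b ∈ C ∧ a ≠ b ∧
    ∃ p : H.Walk a b, IsHamPathOn H (W \ (C \ {a, b})) p ∧
      (∀ q : H.Walk a b, IsHamPathOn H (W \ (C \ {a, b})) q → q = p) ∧
      ∀ c d : V, c ∈ C → d ∈ C → c ≠ d → ({c, d} : Set V) ≠ ({a, b} : Set V) →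
        ∃ q₁ q₂ : H.Walk c d,
          IsHamPathOn H (W \ (C \ {c, d})) q₁ ∧ IsHamPathOn H (W \ (C \ {c, d})) q₂ ∧
          q₁ ≠ q₂ ∧
          (∃ e ∈ p.edges, z ∈ e ∧ e ∉ q₁.edges) ∧ (∃ e ∈ p.edges, z ∈ e ∧ e ∉ q₂.edges))

/-- Chordality: every cycle of length at least 4 has a chord. -/
def Chordal {W : Type} (H : SimpleGraph W) : Prop :=
  ∀ (v : W) (c : H.Walk v v), c.IsCycle → 4 ≤ c.length →
    ∃ a b, a ∈ c.support ∧ b ∈ c.support ∧ H.Adj a b ∧ s(a, b) ∉ c.edges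

theorem SimpleGraph.exists_isCycle_length_four {G : SimpleGraph V} {a b c d : V}
    (hab : G.Adj a b) (hbc : G.Adj b c) (hcd : G.Adj c d) (hda : G.Adj d a)
    (hac : a ≠ c) (hbd : b ≠ d) :
    ∃ p : G.Walk a a, p.IsCycle ∧ p.length = 4 ∧ {x | x ∈ p.support} = {a, b, c, d} := by
  refine ⟨.cons hab (.cons hbc (.cons hcd (.cons hda .nil))), ?_, rfl, ?_⟩
  · have := hab.ne; have := hbc.ne; have := hcd.ne; have := hda.ne
    simp only [Walk.cons_isCycle_iff, Walk.cons_isPath_iff, Walk.IsPath.nil,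
      Walk.support_cons, Walk.support_nil, Walk.edges_cons, Walk.edges_nil, List.mem_cons,
      List.not_mem_nil, Sym2.eq_iff]
    grind
  · ext x
    simp only [Walk.support_cons, Walk.support_nil, List.mem_cons, List.not_mem_nil, or_false,
      Set.mem_ofPred_eq, Set.mem_insert_iff, Set.mem_singleton_iff]
    tauto

theorem adj_and_adj_of_closed_neighbors {G : SimpleGraph V} {u₁ u₂ v : V}
    (hne : u₁ ≠ u₂) (hnadj : ¬ G.Adj u₁ u₂)
    (h₁ : v = u₁ ∨ G.Adj u₁ v) (h₂ : v = u₂ ∨ G.Adj u₂ v) : G.Adj u₁ v ∧ G.Adj u₂ v := by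
  rcases h₁ with rfl | h₁ <;> rcases h₂ with rfl | h₂
  exacts [absurd rfl hne, absurd h₂.symm hnadj, absurd h₁ hnadj, ⟨h₁, h₂⟩]

theorem saturates_four_of_two_common_neighbors {G : SimpleGraph V} {S : Set V}
    (hS : IndepSet G S) {u₁ u₂ a b : V} (hu₁ : u₁ ∈ S) (hu₂ : u₂ ∈ S) (hne : u₁ ≠ u₂)
    (ha₁ : G.Adj u₁ a) (ha₂ : G.Adj u₂ a) (hb₁ : G.Adj u₁ b) (hb₂ : G.Adj u₂ b)
    (hab : a ≠ b) : Saturates G S 4 := by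
  obtain ⟨p, hp, hlen, hsupp⟩ :=
    exists_isCycle_length_four ha₁ ha₂.symm hb₂ hb₁.symm hne hab
  refine ⟨u₁, p, hp, hlen, ?_⟩
  have haS : a ∉ S := fun ha => hS hu₁ ha ha₁
  have hbS : b ∉ S := fun hb => hS hu₁ hb hb₁
  have hinter : S ∩ {x | x ∈ p.support} = {u₁, u₂} := by
    rw [hsupp]
    ext x
    simp only [Set.mem_inter_iff, Set.mem_insert_iff, Set.mem_singleton_iff]
    constructor
    · rintro ⟨hx, rfl | rfl | rfl | rfl⟩ <;> tauto
    · rintro (rfl | rfl) <;> tauto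
  rw [hinter, Set.ncard_pair hne]

theorem closed_neighbourhood_edge_sets_disjoint_general
    {V : Type} (G : SimpleGraph V)
    (S : Set V) (hS : IndepSet G S)
    (hsat : ¬ Saturates G S 4)
    (u₁ u₂ : V) (hu₁ : u₁ ∈ S) (hu₂ : u₂ ∈ S) (hne : u₁ ≠ u₂) :
    Disjoint {e | e ∈ G.edgeSet ∧ ∀ v ∈ e, v = u₁ ∨ G.Adj u₁ v}
             {e | e ∈ G.edgeSet ∧ ∀ v ∈ e, v = u₂ ∨ G.Adj u₂ v} := by
  rw [Set.disjoint_left]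
  rintro ⟨a, b⟩ ⟨hab, h₁⟩ ⟨-, h₂⟩
  have hcommon : ∀ v ∈ s(a, b), G.Adj u₁ v ∧ G.Adj u₂ v := fun v hv =>
    adj_and_adj_of_closed_neighbors hne (hS hu₁ hu₂) (h₁ v hv) (h₂ v hv)
  obtain ⟨ha₁, ha₂⟩ := hcommon a (Sym2.mem_mk_left a b)
  obtain ⟨hb₁, hb₂⟩ := hcommon b (Sym2.mem_mk_right a b)
  exact hsat (saturates_four_of_two_common_neighbors hS hu₁ hu₂ hne ha₁ ha₂ hb₁ hb₂ hab.ne)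

/-- Let `G` be a 4-connected planar triangulation and `S` an independent
set of vertices of degree at most 6 such that for every `u ∈ S` of degree 5 or 6, no two
degree-4 neighbours of `u` are adjacent. If `S` saturates no 4-cycle of `G`, then for any
distinct `u₁, u₂ ∈ S`, the edge sets of `G[N[u₁]]` and `G[N[u₂]]` are disjoint. -/
theorem closed_neighbourhood_edge_sets_disjoint
    {V : Type} [Fintype V] (G : SimpleGraph V)
    (hG : IsPlanarTriangulation G) (h4 : KConnected 4 G)
    (S : Set V) (hS : IndepSet G S) (hdeg : ∀ u ∈ S, vdeg G u ≤ 6)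
    (hnbr : ∀ u ∈ S, vdeg G u = 5 ∨ vdeg G u = 6 →
      ∀ v₁ v₂ : V, G.Adj u v₁ → G.Adj u v₂ → vdeg G v₁ = 4 → vdeg G v₂ = 4 →
        ¬ G.Adj v₁ v₂)
    (hsat : ¬ Saturates G S 4)
    (u₁ u₂ : V) (hu₁ : u₁ ∈ S) (hu₂ : u₂ ∈ S) (hne : u₁ ≠ u₂) :
    Disjoint {e | e ∈ G.edgeSet ∧ ∀ v ∈ e, v = u₁ ∨ G.Adj u₁ v}
             {e | e ∈ G.edgeSet ∧ ∀ v ∈ e, v = u₂ ∨ G.Adj u₂ v} :=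
  closed_neighbourhood_edge_sets_disjoint_general G S hS hsat u₁ u₂ hu₁ hu₂ hne
end

section
/- Let G be a 4-connected planar triangulation and let S be an independent set of vertices of degree at most 6 in G such that S saturates no 4-cycle in G. Then there exists a subset S' of S of size at least |S|/541 such that S' saturates no 5-cycle in G. -/
open SimpleGraph

variable {V : Type}

/-
Call `u, v ∈ S` conflicting if some 5-cycle passes through both. As `S` is independent, such
`u, v` have a common neighbour `x` on the cycle, and the remaining edge of the cycle joins
`N(u) - x` to `N(v) - x`. For fixed `x`, the sets `{u} ∪ (N(u) - x)` with `u ∈ S ∩ N(x)` are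
connected and pairwise disjoint, since two common neighbours of `u, v ∈ S` would form a saturated
4-cycle. Contracting them yields a minor of the planar, hence `K₅`-minor-free, graph `G`, so by
Mader's theorem at most `4 |S ∩ N(x)|` pairs of them touch. Summing over `x`, each `u ∈ S` is
counted at most `deg u ≤ 6` times, so every subset of `S` has average conflict degree at most
`48`, and a greedy choice gives a conflict-free subset of size at least `|S| / 49`.
-/

open scoped Classical

def Touches (G : SimpleGraph V) (A B : Set V) : Prop := ∃ a ∈ A, ∃ b ∈ B, G.Adj a b

section Touches

variable {G : SimpleGraph V} {A B C : Set V}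

theorem Touches.symm (h : Touches G A B) : Touches G B A := by
  obtain ⟨a, ha, b, hb, hab⟩ := h
  exact ⟨b, hb, a, ha, hab.symm⟩

theorem Touches.mono_left (h : Touches G A B) (hAC : A ⊆ C) : Touches G C B := by
  obtain ⟨a, ha, b, hb, hab⟩ := h
  exact ⟨a, hAC ha, b, hb, hab⟩

theorem touches_union_left : Touches G (A ∪ B) C ↔ Touches G A C ∨ Touches G B C := by
  simp only [Touches, Set.mem_union, or_and_right, exists_or]

end Touches

def IsBranchFamily (G : SimpleGraph V) (M : Finset (Set V)) : Prop :=
  (∀ A ∈ M, (G.induce A).Connected) ∧ ∀ A ∈ M, ∀ B ∈ M, A ≠ B → Disjoint A B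

noncomputable def touchNbhd (G : SimpleGraph V) (M : Finset (Set V)) (A : Set V) :
    Finset (Set V) :=
  (M.erase A).filter (Touches G A)

noncomputable def touchDeg (G : SimpleGraph V) (M : Finset (Set V)) (A : Set V) : ℕ :=
  (touchNbhd G M A).card

-- Twice the number of edges of the graph obtained by contracting each member of `M`.
noncomputable def touchDegSum (G : SimpleGraph V) (M : Finset (Set V)) : ℕ :=
  ∑ A ∈ M, touchDeg G M A

noncomputable def commonTouch (G : SimpleGraph V) (M : Finset (Set V)) (A B : Set V) : ℕ :=
  (((M.erase A).erase B).filter (fun D => Touches G A D ∧ Touches G B D)).card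

noncomputable def mergeFamily (M : Finset (Set V)) (A B : Set V) : Finset (Set V) :=
  insert (A ∪ B) ((M.erase A).erase B)

section TouchCounting

variable {G : SimpleGraph V} {M : Finset (Set V)} {A B : Set V}

theorem mem_touchNbhd {D : Set V} : D ∈ touchNbhd G M A ↔ D ∈ M ∧ D ≠ A ∧ Touches G A D := by
  rw [touchNbhd, Finset.mem_filter, Finset.mem_erase, and_assoc, and_left_comm]

theorem touchDeg_erase (hA : A ∈ M) (hB : B ∈ M.erase A) :
    touchDeg G (M.erase A) B + (if Touches G B A then 1 else 0) = touchDeg G M B := by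
  have hA' : A ∈ M.erase B := Finset.mem_erase.mpr ⟨(Finset.ne_of_mem_erase hB).symm, hA⟩
  rw [touchDeg, touchDeg, touchNbhd, touchNbhd, Finset.erase_right_comm, Finset.filter_erase]
  split_ifs with hT
  · exact Finset.card_erase_add_one (Finset.mem_filter.mpr ⟨hA', hT⟩)
  · rw [Finset.erase_eq_of_notMem (by simp [hT]), add_zero]

theorem touchDegSum_erase (hA : A ∈ M) :
    touchDegSum G (M.erase A) + 2 * touchDeg G M A = touchDegSum G M := by
  have hsymm : ∑ B ∈ M.erase A, (if Touches G B A then 1 else 0) = touchDeg G M A := by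
    rw [← Finset.card_filter, touchDeg, touchNbhd]
    exact congrArg Finset.card (Finset.filter_congr fun _ _ => ⟨Touches.symm, Touches.symm⟩)
  have hsplit : ∑ B ∈ M.erase A, touchDeg G M B =
      touchDegSum G (M.erase A) + touchDeg G M A := by
    rw [← hsymm, touchDegSum, ← Finset.sum_add_distrib]
    exact Finset.sum_congr rfl fun B hB => (touchDeg_erase hA hB).symm
  calc _ = ∑ B ∈ M.erase A, touchDeg G M B + touchDeg G M A := by rw [hsplit]; ring
    _ = touchDegSum G M := Finset.sum_erase_add M _ hA

theorem touchDeg_eq_card_erase_add_one (hB : B ∈ M) (hAB : A ≠ B) (hT : Touches G A B) :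
    touchDeg G M A = (((M.erase A).erase B).filter (Touches G A)).card + 1 := by
  rw [touchDeg, touchNbhd, Finset.filter_erase (a := B) (s := M.erase A),
    Finset.card_erase_add_one]
  exact Finset.mem_filter.mpr ⟨Finset.mem_erase.mpr ⟨hAB.symm, hB⟩, hT⟩

theorem touchDegSum_mergeFamily (hA : A ∈ M) (hB : B ∈ M) (hAB : A ≠ B)
    (hT : Touches G A B) (hfresh : A ∪ B ∉ (M.erase A).erase B) :
    touchDegSum G (mergeFamily M A B) + 2 * commonTouch G M A B + 2 = touchDegSum G M := by
  have hfilter : ((M.erase A).erase B).filter (Touches G (A ∪ B)) =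
      ((M.erase A).erase B).filter (Touches G A) ∪
        ((M.erase A).erase B).filter (Touches G B) := by
    rw [← Finset.filter_or]
    exact Finset.filter_congr fun _ _ => touches_union_left
  have hmerged :=
    touchDegSum_erase (G := G) (Finset.mem_insert_self (A ∪ B) ((M.erase A).erase B))
  rw [Finset.erase_insert hfresh, touchDeg, touchNbhd, Finset.erase_insert hfresh,
    hfilter] at hmerged
  have hdelA := touchDegSum_erase (G := G) hA
  rw [touchDeg_eq_card_erase_add_one hB hAB hT] at hdelA
  have hdelB := touchDegSum_erase (G := G) (Finset.mem_erase.mpr ⟨hAB.symm, hB⟩)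
  rw [touchDeg, touchNbhd] at hdelB
  have hunion := Finset.card_union_add_card_inter
    (((M.erase A).erase B).filter (Touches G A)) (((M.erase A).erase B).filter (Touches G B))
  rw [← Finset.filter_and] at hunion
  rw [mergeFamily, commonTouch]
  omega

theorem touchDegSum_image {f : V → Set V} {T : Finset V} (hf : Set.InjOn f T) :
    touchDegSum G (T.image f) =
      ∑ u ∈ T, (T.filter fun v => v ≠ u ∧ Touches G (f u) (f v)).card := by
  rw [touchDegSum, Finset.sum_image hf]
  refine Finset.sum_congr rfl fun u hu => ?_
  rw [touchDeg, ← Finset.card_image_of_injOn (hf.mono (Finset.filter_subset _ T))]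
  congr 1
  ext B
  simp only [mem_touchNbhd, Finset.mem_image, Finset.mem_filter]
  constructor
  · rintro ⟨⟨v, hv, rfl⟩, hvu, hT⟩
    exact ⟨v, ⟨hv, fun h => hvu (h ▸ rfl), hT⟩, rfl⟩
  · rintro ⟨v, ⟨hv, hvu, hT⟩, rfl⟩
    exact ⟨⟨v, hv, rfl⟩, fun h => hvu (hf hv hu h), hT⟩

end TouchCounting

section Branch

variable {G : SimpleGraph V} {M N : Finset (Set V)} {A B : Set V}

theorem IsBranchFamily.subset (hM : IsBranchFamily G M) (hNM : N ⊆ M) : IsBranchFamily G N :=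
  ⟨fun A hA => hM.1 A (hNM hA), fun A hA B hB hAB => hM.2 A (hNM hA) B (hNM hB) hAB⟩

theorem IsBranchFamily.nonempty (hM : IsBranchFamily G M) (hA : A ∈ M) : A.Nonempty :=
  Set.nonempty_coe_sort.mp (hM.1 A hA).nonempty

theorem IsBranchFamily.union_notMem (hM : IsBranchFamily G M) (hA : A ∈ M) :
    A ∪ B ∉ (M.erase A).erase B := by
  intro h
  have hmem := Finset.mem_of_mem_erase h
  obtain ⟨a, ha⟩ := hM.nonempty hA
  exact Set.disjoint_left.mp (hM.2 _ (Finset.mem_of_mem_erase hmem) A hA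
    (Finset.ne_of_mem_erase hmem)) (Or.inl ha) ha

theorem IsBranchFamily.mergeFamily (hM : IsBranchFamily G M) (hA : A ∈ M) (hB : B ∈ M)
    (hT : Touches G A B) : IsBranchFamily G (mergeFamily M A B) := by
  have hrest : ∀ D ∈ (M.erase A).erase B, D ∈ M ∧ Disjoint (A ∪ B) D := fun D hD => by
    obtain ⟨hDB, hD⟩ := Finset.mem_erase.mp hD
    obtain ⟨hDA, hDM⟩ := Finset.mem_erase.mp hD
    exact ⟨hDM, Set.disjoint_union_left.mpr
      ⟨hM.2 A hA D hDM (Ne.symm hDA), hM.2 B hB D hDM (Ne.symm hDB)⟩⟩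
  obtain ⟨a, ha, b, hb, hab⟩ := hT
  refine ⟨fun D hD => ?_, fun C hC D hD hCD => ?_⟩
  · rcases Finset.mem_insert.mp hD with rfl | hD
    · exact connected_induce_union (hM.1 A hA).preconnected (hM.1 B hB).preconnected ha hb hab
    · exact hM.1 D (hrest D hD).1
  · rcases Finset.mem_insert.mp hC with rfl | hC <;> rcases Finset.mem_insert.mp hD with rfl | hD
    · exact absurd rfl hCD
    · exact (hrest D hD).2
    · exact (hrest C hC).2.symm
    · exact hM.2 C (hrest C hC).1 D (hrest D hD).1 hCD

theorem card_mergeFamily (hA : A ∈ M) (hB : B ∈ M) (hAB : A ≠ B)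
    (hfresh : A ∪ B ∉ (M.erase A).erase B) : (mergeFamily M A B).card + 1 = M.card := by
  rw [mergeFamily, Finset.card_insert_of_notMem hfresh,
    Finset.card_erase_add_one (Finset.mem_erase.mpr ⟨hAB.symm, hB⟩),
    Finset.card_erase_add_one hA]

end Branch

/-- A `K_n` minor model built from `M`. Containing a member of `M` and lying in `⋃ M` is what
lets a model built from the members touching `A ∈ M` be extended by `A` itself. -/
def CliqueModelIn (G : SimpleGraph V) (M : Finset (Set V)) (n : ℕ) : Prop :=
  ∃ K : Finset (Set V), K.card = n ∧
    (∀ A ∈ K, (G.induce A).Connected ∧ (∃ P ∈ M, P ⊆ A) ∧ A ⊆ ⋃₀ ↑M) ∧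
    ∀ A ∈ K, ∀ B ∈ K, A ≠ B → Disjoint A B ∧ Touches G A B

section CliqueModel

variable {G : SimpleGraph V} {M N : Finset (Set V)} {A B : Set V} {n : ℕ}

theorem CliqueModelIn.mono (h : CliqueModelIn G N n) (hparts : ∀ P ∈ N, ∃ Q ∈ M, Q ⊆ P)
    (hunion : ⋃₀ (↑N : Set (Set V)) ⊆ ⋃₀ ↑M) : CliqueModelIn G M n := by
  obtain ⟨K, hcard, hK, hpair⟩ := h
  refine ⟨K, hcard, fun A hA => ?_, hpair⟩
  obtain ⟨hconn, ⟨P, hP, hPA⟩, hAN⟩ := hK A hA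
  obtain ⟨Q, hQ, hQP⟩ := hparts P hP
  exact ⟨hconn, ⟨Q, hQ, hQP.trans hPA⟩, hAN.trans hunion⟩

theorem CliqueModelIn.of_subset (h : CliqueModelIn G N n) (hNM : N ⊆ M) :
    CliqueModelIn G M n :=
  h.mono (fun P hP => ⟨P, hNM hP, subset_rfl⟩) (Set.sUnion_mono (by exact_mod_cast hNM))

theorem CliqueModelIn.of_mergeFamily (h : CliqueModelIn G (mergeFamily M A B) n)
    (hA : A ∈ M) (hB : B ∈ M) : CliqueModelIn G M n := by
  refine h.mono (fun P hP => ?_) (Set.sUnion_subset fun X hX => ?_)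
  · rcases Finset.mem_insert.mp hP with rfl | hP
    · exact ⟨A, hA, Set.subset_union_left⟩
    · exact ⟨P, Finset.mem_of_mem_erase (Finset.mem_of_mem_erase hP), subset_rfl⟩
  · rcases Finset.mem_insert.mp (Finset.mem_coe.mp hX) with rfl | hX
    · exact Set.union_subset (Set.subset_sUnion_of_mem hA) (Set.subset_sUnion_of_mem hB)
    · exact Set.subset_sUnion_of_mem
        (Finset.mem_coe.mpr (Finset.mem_of_mem_erase (Finset.mem_of_mem_erase hX)))

theorem cliqueModelIn_two (hM : IsBranchFamily G M) (hA : A ∈ M) (hB : B ∈ M) (hAB : A ≠ B)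
    (hT : Touches G A B) : CliqueModelIn G M 2 := by
  refine ⟨{A, B}, Finset.card_pair hAB, fun C hC => ?_, fun C hC D hD hCD => ?_⟩
  · have hCM : C ∈ M := by rcases Finset.mem_insert.mp hC with rfl | hC <;> simp_all
    exact ⟨hM.1 C hCM, ⟨C, hCM, subset_rfl⟩, Set.subset_sUnion_of_mem hCM⟩
  · simp only [Finset.mem_insert, Finset.mem_singleton] at hC hD
    rcases hC with rfl | rfl <;> rcases hD with rfl | rfl
    · exact absurd rfl hCD
    · exact ⟨hM.2 _ hA _ hB hCD, hT⟩
    · exact ⟨hM.2 _ hB _ hA hCD, hT.symm⟩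
    · exact absurd rfl hCD

theorem CliqueModelIn.insert_of_touchNbhd (hM : IsBranchFamily G M) (hA : A ∈ M)
    (h : CliqueModelIn G (touchNbhd G M A) n) : CliqueModelIn G M (n + 1) := by
  obtain ⟨K, hcard, hK, hpair⟩ := h
  have hnbhd : ∀ D ∈ touchNbhd G M A, D ∈ M ∧ D ≠ A ∧ Touches G A D := fun D hD =>
    mem_touchNbhd.mp hD
  have hnew : ∀ C ∈ K, Disjoint A C ∧ Touches G A C := fun C hC => by
    obtain ⟨-, ⟨P, hP, hPC⟩, hCN⟩ := hK C hC
    refine ⟨Set.disjoint_of_subset_right hCN (Set.disjoint_sUnion_right.mpr fun D hD => ?_),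
      ((hnbhd P hP).2.2.symm.mono_left hPC).symm⟩
    obtain ⟨hDM, hDA, -⟩ := hnbhd D hD
    exact hM.2 A hA D hDM hDA.symm
  have hAK : A ∉ K := fun hAK => by
    obtain ⟨a, ha⟩ := hM.nonempty hA
    exact Set.disjoint_left.mp (hnew A hAK).1 ha ha
  refine ⟨insert A K, by rw [Finset.card_insert_of_notMem hAK, hcard], fun C hC => ?_,
    fun C hC D hD hCD => ?_⟩
  · rcases Finset.mem_insert.mp hC with rfl | hC
    · exact ⟨hM.1 C hA, ⟨C, hA, subset_rfl⟩, Set.subset_sUnion_of_mem hA⟩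
    · obtain ⟨hconn, ⟨P, hP, hPC⟩, hCN⟩ := hK C hC
      exact ⟨hconn, ⟨P, (hnbhd P hP).1, hPC⟩,
        hCN.trans (Set.sUnion_mono fun D hD => (hnbhd D hD).1)⟩
  · rcases Finset.mem_insert.mp hC with rfl | hCK <;> rcases Finset.mem_insert.mp hD with rfl | hDK
    · exact absurd rfl hCD
    · exact hnew D hDK
    · exact ⟨(hnew C hCK).1.symm, (hnew C hCK).2.symm⟩
    · exact hpair C hCK D hDK hCD

theorem CliqueModelIn.hasMinor (h : CliqueModelIn G M n) :
    HasMinor G (⊤ : SimpleGraph (Fin n)) := by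
  obtain ⟨K, hcard, hK, hpair⟩ := h
  let e := K.equivFinOfCardEq hcard
  have hne : ∀ {i j}, i ≠ j → ((e.symm i : Set V)) ≠ e.symm j := fun hij hEq =>
    hij (e.symm.injective (Subtype.ext hEq))
  refine ⟨fun i => e.symm i, fun i => ?_, fun i => (hK _ (e.symm i).2).1, fun i j hij => ?_,
    fun i j hij => ?_⟩
  · exact Set.nonempty_coe_sort.mp (hK _ (e.symm i).2).1.nonempty
  · exact (hpair _ (e.symm i).2 _ (e.symm j).2 (hne hij)).1
  · exact (hpair _ (e.symm i).2 _ (e.symm j).2 (hne hij)).2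

end CliqueModel

section Mader

variable {G : SimpleGraph V} {M : Finset (Set V)} {A : Set V}

theorem exists_touches_of_touchDegSum_pos (h : 0 < touchDegSum G M) :
    ∃ A ∈ M, ∃ B ∈ M, A ≠ B ∧ Touches G A B := by
  have h' : ∑ _A ∈ M, 0 < ∑ A ∈ M, touchDeg G M A := by rwa [Finset.sum_const_zero]
  obtain ⟨A, hA, hdeg⟩ := Finset.exists_lt_of_sum_lt h'
  obtain ⟨B, hB⟩ := Finset.card_pos.mp (show 0 < touchDeg G M A from hdeg)
  obtain ⟨hB, hT⟩ := Finset.mem_filter.mp hB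
  exact ⟨A, hA, B, Finset.mem_of_mem_erase hB, (Finset.ne_of_mem_erase hB).symm, hT⟩

theorem touchDegSum_singleton : touchDegSum G {A} = 0 := by
  simp [touchDegSum, touchDeg, touchNbhd]

theorem commonTouch_le_touchDeg_touchNbhd (D : Set V) :
    commonTouch G M D A ≤ touchDeg G (touchNbhd G M A) D := by
  refine Finset.card_le_card fun X hX => ?_
  obtain ⟨hX, hDX, hAX⟩ := Finset.mem_filter.mp hX
  obtain ⟨hXA, hX⟩ := Finset.mem_erase.mp hX
  obtain ⟨hXD, hXM⟩ := Finset.mem_erase.mp hX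
  exact Finset.mem_filter.mpr ⟨Finset.mem_erase.mpr
    ⟨hXD, Finset.mem_filter.mpr ⟨Finset.mem_erase.mpr ⟨hXA, hXM⟩, hAX⟩⟩, hDX⟩

theorem mul_card_le_touchDegSum_touchNbhd {c : ℕ} (hA : A ∈ M)
    (hdense : ∀ B ∈ M, ∀ D ∈ M, B ≠ D → Touches G B D → c ≤ commonTouch G M B D) :
    c * (touchNbhd G M A).card ≤ touchDegSum G (touchNbhd G M A) := by
  rw [mul_comm, ← smul_eq_mul, ← Finset.sum_const]
  refine Finset.sum_le_sum fun D hD => ?_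
  obtain ⟨hDM, hDA, hT⟩ := mem_touchNbhd.mp hD
  exact (hdense D hDM A hA hDA hT.symm).trans (commonTouch_le_touchDeg_touchNbhd D)

/-- Mader's theorem, for the graph obtained by contracting each member of `M`: delete a member of
small degree, or contract a touching pair with few common neighbours, or else find a denser
family among the neighbours of a member. -/
theorem cliqueModelIn_of_touchDegSum (m : ℕ) (hM : IsBranchFamily G M) (hne : M.Nonempty)
    (hsum : 2 ^ m * M.card ≤ touchDegSum G M) : CliqueModelIn G M (m + 2) := by
  induction m generalizing M with
  | zero =>
    have hpos : 0 < touchDegSum G M := by have := hne.card_pos; omega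
    obtain ⟨A, hA, B, hB, hAB, hT⟩ := exists_touches_of_touchDegSum_pos hpos
    exact cliqueModelIn_two hM hA hB hAB hT
  | succ m ih =>
    induction hk : M.card using Nat.strong_induction_on generalizing M with
    | _ k IH =>
    subst hk
    have hpow : 2 ^ (m + 1) = 2 * 2 ^ m := by ring
    have hc : 1 ≤ 2 ^ m := Nat.one_le_two_pow
    rw [hpow] at hsum
    by_cases hlow : ∃ A ∈ M, touchDeg G M A ≤ 2 ^ m
    · obtain ⟨A, hA, hdeg⟩ := hlow
      have hrest : (M.erase A).Nonempty := by
        rw [Finset.nonempty_iff_ne_empty, Ne, Finset.erase_eq_empty_iff]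
        rintro (rfl | rfl)
        · exact Finset.notMem_empty A hA
        · rw [touchDegSum_singleton, Finset.card_singleton] at hsum
          omega
      have hsum' := touchDegSum_erase (G := G) hA
      have hcard := Finset.card_erase_add_one hA
      refine (IH _ (by omega) (hM.subset (Finset.erase_subset _ _)) hrest ?_ rfl).of_subset
        (Finset.erase_subset _ _)
      rw [hpow]
      nlinarith
    by_cases hsparse : ∃ A ∈ M, ∃ B ∈ M, A ≠ B ∧ Touches G A B ∧ commonTouch G M A B < 2 ^ m
    · obtain ⟨A, hA, B, hB, hAB, hT, hcommon⟩ := hsparse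
      have hfresh := hM.union_notMem (B := B) hA
      have hcard := card_mergeFamily hA hB hAB hfresh
      have hsum' := touchDegSum_mergeFamily hA hB hAB hT hfresh
      refine (IH _ (by omega) (hM.mergeFamily hA hB hT) (Finset.insert_nonempty _ _) ?_ rfl)
        |>.of_mergeFamily hA hB
      rw [hpow]
      nlinarith
    push Not at hlow hsparse
    obtain ⟨A, hA⟩ := hne
    refine CliqueModelIn.insert_of_touchNbhd hM hA (ih (hM.subset ?_) ?_
      (mul_card_le_touchDegSum_touchNbhd hA hsparse))
    · exact (Finset.filter_subset _ _).trans (Finset.erase_subset _ _)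
    · exact Finset.card_pos.mp (lt_of_lt_of_le hc (hlow A hA).le)

theorem touchDegSum_le_of_not_hasMinor (hG : ¬ HasMinor G (⊤ : SimpleGraph (Fin 5)))
    {M : Finset (Set V)} (hM : IsBranchFamily G M) : touchDegSum G M ≤ 8 * M.card := by
  by_contra! h
  have hne : M.Nonempty :=
    Finset.nonempty_iff_ne_empty.mpr fun h0 => by simp [h0, touchDegSum] at h
  exact hG (cliqueModelIn_of_touchDegSum 3 hM hne h.le).hasMinor

end Mader

section Cycles

variable {G : SimpleGraph V}

theorem exists_common_adj_of_mem_five_cycle {u v w : V} {c : G.Walk w w} (hc : c.IsCycle)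
    (hlen : c.length = 5) (hu : u ∈ c.support) (hv : v ∈ c.support) (huv : u ≠ v)
    (hnadj : ¬ G.Adj u v) :
    ∃ x, G.Adj x u ∧ G.Adj x v ∧ ∃ z y, z ≠ x ∧ y ≠ x ∧ G.Adj u z ∧ G.Adj z y ∧ G.Adj y v := by
  obtain ⟨c, hc, hlen, hv⟩ : ∃ c : G.Walk u u, c.IsCycle ∧ c.length = 5 ∧ v ∈ c.support :=
    ⟨c.rotate u hu, hc.rotate hu, by simpa using hlen, (c.mem_support_rotate_iff u hu).mpr hv⟩
  rcases c with _ | ⟨h1, _ | ⟨h2, _ | ⟨h3, _ | ⟨h4, _ | ⟨h5, _ | ⟨h6, p⟩⟩⟩⟩⟩⟩ <;>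
    simp only [Walk.length_cons, Walk.length_nil] at hlen <;> try omega
  rename_i a b d e
  have hnodup := hc.support_nodup
  simp only [Walk.support_cons, Walk.support_nil, List.tail_cons, List.nodup_cons,
    List.mem_cons, List.not_mem_nil, or_false, not_or] at hnodup hv
  rcases hv with rfl | rfl | rfl | rfl | rfl | rfl
  · exact absurd rfl huv
  · exact absurd h1 hnadj
  · exact ⟨a, h1.symm, h2, e, d, by tauto, by tauto, h5.symm, h4.symm, h3.symm⟩
  · exact ⟨e, h5, h4.symm, a, b, by tauto, by tauto, h1, h2, h3⟩
  · exact absurd h5.symm hnadj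
  · exact absurd rfl huv

theorem saturates_four_of_two_common_adj {S : Set V} (hS : IndepSet G S) {u v w x : V}
    (hu : u ∈ S) (hv : v ∈ S) (huv : u ≠ v) (hwx : w ≠ x) (huw : G.Adj u w) (hvw : G.Adj v w)
    (hux : G.Adj u x) (hvx : G.Adj v x) : Saturates G S 4 := by
  have hwS : w ∉ S := fun h => hS hu h huw
  have hxS : x ∉ S := fun h => hS hu h hux
  refine ⟨u, .cons huw (.cons hvw.symm (.cons hvx (.cons hux.symm .nil))), ?_, rfl, ?_⟩
  · have := huw.ne; have := hvw.ne; have := hux.ne; have := hvx.ne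
    simp only [Walk.cons_isCycle_iff, Walk.cons_isPath_iff, Walk.isPath_iff_nil, Walk.support_cons,
      Walk.support_nil, Walk.edges_cons, Walk.edges_nil, List.mem_cons, List.not_mem_nil, Sym2.eq,
      Sym2.rel_iff']
    grind
  · convert Set.ncard_pair huv using 2
    ext y
    simp only [Walk.support_cons, Walk.support_nil, Set.mem_inter_iff, Set.mem_ofPred_eq,
      List.mem_cons, List.not_mem_nil, Set.mem_insert_iff, Set.mem_singleton_iff]
    grind

end Cycles

def fiveCycleGraph (G : SimpleGraph V) : SimpleGraph V where
  Adj u v := u ≠ v ∧ ∃ (w : V) (c : G.Walk w w), c.IsCycle ∧ c.length = 5 ∧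
    u ∈ c.support ∧ v ∈ c.support
  symm := ⟨fun _ _ ⟨huv, w, c, hc, hlen, hu, hv⟩ => ⟨huv.symm, w, c, hc, hlen, hv, hu⟩⟩
  loopless := ⟨fun _ h => h.1 rfl⟩

section Stars

variable {G : SimpleGraph V} {S : Set V}

-- The branch sets contracted at the common neighbour `x`.
def starOff (G : SimpleGraph V) (x u : V) : Set V := insert u (G.neighborSet u \ {x})

theorem induce_connected_of_forall_adj {u : V} {A : Set V} (hu : u ∈ A)
    (h : ∀ a ∈ A, a ≠ u → G.Adj u a) : (G.induce A).Connected := by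
  have hreach : ∀ a : A, (G.induce A).Reachable a ⟨u, hu⟩ := fun ⟨a, ha⟩ => by
    by_cases hau : a = u
    · subst hau; rfl
    · exact Adj.reachable (h a ha hau).symm
  exact (connected_iff _).mpr ⟨fun a b => (hreach a).trans (hreach b).symm, ⟨⟨u, hu⟩⟩⟩

theorem starOff_connected (x u : V) : (G.induce (starOff G x u)).Connected :=
  induce_connected_of_forall_adj (Set.mem_insert u _) fun _ ha hau =>
    ((Set.mem_insert_iff.mp ha).resolve_left hau).1

theorem starOff_injOn (hS : IndepSet G S) (x : V) : S.InjOn (starOff G x) := by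
  intro u hu v hv h
  rcases (h ▸ Set.mem_insert u _ : u ∈ starOff G x v) with huv | ⟨hvu, -⟩
  · exact huv
  · exact absurd hvu (hS hv hu)

theorem disjoint_starOff (hS : IndepSet G S) (hsat : ¬ Saturates G S 4) {x u v : V}
    (hu : u ∈ S) (hv : v ∈ S) (huv : u ≠ v) (hxu : G.Adj x u) (hxv : G.Adj x v) :
    Disjoint (starOff G x u) (starOff G x v) := by
  rw [Set.disjoint_left]
  rintro w (rfl | ⟨hwu, hwx⟩) (hwv | ⟨hwv, -⟩)
  · exact huv hwv
  · exact hS hv hu hwv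
  · exact hS hu hv (hwv ▸ hwu)
  · exact hsat (saturates_four_of_two_common_adj hS hu hv huv hwx hwu hwv hxu.symm hxv.symm)

theorem exists_touches_starOff_of_fiveCycleGraph_adj (hS : IndepSet G S) {u v : V}
    (hu : u ∈ S) (hv : v ∈ S) (h : (fiveCycleGraph G).Adj u v) :
    ∃ x, G.Adj u x ∧ G.Adj v x ∧ Touches G (starOff G x u) (starOff G x v) := by
  obtain ⟨huv, w, c, hc, hlen, hu', hv'⟩ := h
  obtain ⟨x, hxu, hxv, z, y, hzx, hyx, huz, hzy, hyv⟩ :=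
    exists_common_adj_of_mem_five_cycle hc hlen hu' hv' huv (hS hu hv)
  exact ⟨x, hxu.symm, hxv.symm, z, Or.inr ⟨huz, hzx⟩, y, Or.inr ⟨hyv.symm, hyx⟩, hzy⟩

end Stars

noncomputable def starMates (G : SimpleGraph V) (T : Finset V) (x u : V) : Finset V :=
  (T.filter (G.Adj · x)).filter fun v => v ≠ u ∧ Touches G (starOff G x u) (starOff G x v)

section Counting

variable {G : SimpleGraph V} {S : Set V}

theorem sum_card_starMates_le (hG : ¬ HasMinor G (⊤ : SimpleGraph (Fin 5)))
    (hS : IndepSet G S) (hsat : ¬ Saturates G S 4) {T : Finset V} (hTS : ↑T ⊆ S) (x : V) :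
    ∑ u ∈ T.filter (G.Adj · x), (starMates G T x u).card ≤ 8 * (T.filter (G.Adj · x)).card := by
  have hmem : ∀ u ∈ T.filter (G.Adj · x), u ∈ S ∧ G.Adj x u := fun u hu =>
    ⟨hTS (Finset.mem_filter.mp hu).1, (Finset.mem_filter.mp hu).2.symm⟩
  have hinj : Set.InjOn (starOff G x) ↑(T.filter (G.Adj · x)) :=
    (starOff_injOn hS x).mono fun u hu => (hmem u hu).1
  have hbranch : IsBranchFamily G ((T.filter (G.Adj · x)).image (starOff G x)) := by
    refine ⟨fun A hA => ?_, fun A hA B hB hAB => ?_⟩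
    · obtain ⟨u, -, rfl⟩ := Finset.mem_image.mp hA
      exact starOff_connected x u
    · obtain ⟨u, hu, rfl⟩ := Finset.mem_image.mp hA
      obtain ⟨v, hv, rfl⟩ := Finset.mem_image.mp hB
      exact disjoint_starOff hS hsat (hmem u hu).1 (hmem v hv).1 (fun h => hAB (h ▸ rfl))
        (hmem u hu).2 (hmem v hv).2
  calc _ = touchDegSum G ((T.filter (G.Adj · x)).image (starOff G x)) :=
        (touchDegSum_image hinj).symm
    _ ≤ 8 * (T.filter (G.Adj · x)).card :=
        (touchDegSum_le_of_not_hasMinor hG hbranch).trans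
          (Nat.mul_le_mul_left 8 Finset.card_image_le)

theorem card_filter_adj_eq_vdeg [Fintype V] (G : SimpleGraph V) (u : V) :
    (Finset.univ.filter (G.Adj u)).card = vdeg G u := by
  rw [vdeg, ← Set.ncard_coe_finset]
  congr 1
  ext
  simp

theorem sum_card_fiveCycleGraph_adj_le [Fintype V] (hG : ¬ HasMinor G (⊤ : SimpleGraph (Fin 5)))
    (hS : IndepSet G S) (hsat : ¬ Saturates G S 4) (hdeg : ∀ u ∈ S, vdeg G u ≤ 6)
    {T : Finset V} (hTS : ↑T ⊆ S) :
    ∑ u ∈ T, (T.filter ((fiveCycleGraph G).Adj u)).card ≤ 48 * T.card := by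
  have hcover : ∀ u ∈ T, T.filter ((fiveCycleGraph G).Adj u) ⊆
      (Finset.univ.filter (G.Adj u)).biUnion fun x => starMates G T x u := fun u hu v hv => by
    obtain ⟨hvT, huv⟩ := Finset.mem_filter.mp hv
    obtain ⟨x, hux, hvx, hT⟩ :=
      exists_touches_starOff_of_fiveCycleGraph_adj hS (hTS hu) (hTS hvT) huv
    simp only [starMates, Finset.mem_biUnion, Finset.mem_filter, Finset.mem_univ, true_and]
    exact ⟨x, hux, ⟨hvT, hvx⟩, huv.ne.symm, hT⟩
  calc ∑ u ∈ T, (T.filter ((fiveCycleGraph G).Adj u)).card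
      ≤ ∑ u ∈ T, ∑ x ∈ Finset.univ.filter (G.Adj u), (starMates G T x u).card :=
        Finset.sum_le_sum fun u hu => (Finset.card_le_card (hcover u hu)).trans
          Finset.card_biUnion_le
    _ = ∑ x, ∑ u ∈ T.filter (G.Adj · x), (starMates G T x u).card :=
        Finset.sum_sum_bipartiteAbove_eq_sum_sum_bipartiteBelow _ _
    _ ≤ ∑ x, 8 * (T.filter (G.Adj · x)).card :=
        Finset.sum_le_sum fun x _ => sum_card_starMates_le hG hS hsat hTS x
    _ = 8 * ∑ u ∈ T, vdeg G u := by
        rw [← Finset.mul_sum, ← Finset.sum_congr rfl fun u _ => card_filter_adj_eq_vdeg G u]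
        exact congrArg _ (Finset.sum_card_bipartiteAbove_eq_sum_card_bipartiteBelow _).symm
    _ ≤ 8 * ∑ _u ∈ T, 6 := by
        gcongr with u hu
        exact hdeg u (hTS hu)
    _ = 48 * T.card := by rw [Finset.sum_const, smul_eq_mul]; ring

end Counting

theorem exists_isIndepSet_of_forall_exists_degree_le {H : SimpleGraph V} (d : ℕ)
    (S : Finset V) (hdeg : ∀ T ⊆ S, T.Nonempty → ∃ u ∈ T, (T.filter (H.Adj u)).card ≤ d) :
    ∃ I ⊆ S, H.IsIndepSet ↑I ∧ S.card ≤ (d + 1) * I.card := by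
  induction S using Finset.strongInduction with
  | H S ih =>
  rcases S.eq_empty_or_nonempty with rfl | hne
  · exact ⟨∅, subset_rfl, by simp, by simp⟩
  obtain ⟨u, hu, hdu⟩ := hdeg S subset_rfl hne
  have hD : insert u (S.filter (H.Adj u)) ⊆ S := Finset.insert_subset hu (Finset.filter_subset _ _)
  have hsub := Finset.sdiff_ssubset hD (Finset.insert_nonempty _ _)
  obtain ⟨I, hIS, hI, hcard⟩ := ih _ hsub fun T hT => hdeg T (hT.trans hsub.subset)
  have hfar : ∀ v ∈ I, v ∉ insert u (S.filter (H.Adj u)) := fun v hv =>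
    (Finset.mem_sdiff.mp (hIS hv)).2
  refine ⟨insert u I, Finset.insert_subset hu (hIS.trans hsub.subset), ?_, ?_⟩
  · rw [Finset.coe_insert]
    refine hI.insert fun v hv _ => ?_
    have huv : ¬ H.Adj u v := fun h =>
      hfar v hv (Finset.mem_insert_of_mem (Finset.mem_filter.mpr ⟨hsub.subset (hIS hv), h⟩))
    exact ⟨huv, fun h => huv h.symm⟩
  · have hsplit := Finset.card_le_card_sdiff_add_card (s := S) (t := insert u (S.filter (H.Adj u)))
    have hDcard := Finset.card_insert_le u (S.filter (H.Adj u))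
    rw [Finset.card_insert_of_notMem fun h => hfar u h (Finset.mem_insert_self _ _)]
    nlinarith

theorem not_saturates_five_of_isIndepSet {G : SimpleGraph V} {S : Set V}
    (hS : (fiveCycleGraph G).IsIndepSet S) : ¬ Saturates G S 5 := by
  rintro ⟨w, c, hc, hlen, hcard⟩
  obtain ⟨u, v, huv, huv'⟩ := Set.ncard_eq_two.mp hcard
  have hu : u ∈ S ∩ {x | x ∈ c.support} := huv' ▸ Set.mem_insert u {v}
  have hv : v ∈ S ∩ {x | x ∈ c.support} := huv' ▸ Set.mem_insert_of_mem u rfl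
  exact hS hu.1 hv.1 huv ⟨huv, w, c, hc, hlen, hu.2, hv.2⟩

theorem subset_saturating_no_five_cycle_general
    {V : Type} [Fintype V] (G : SimpleGraph V)
    (hG : IsPlanarTriangulation G)
    (S : Set V) (hS : IndepSet G S) (hdeg : ∀ u ∈ S, vdeg G u ≤ 6)
    (hsat : ¬ Saturates G S 4) :
    ∃ S' ⊆ S, (S.ncard : ℝ) / 541 ≤ (S'.ncard : ℝ) ∧ ¬ Saturates G S' 5 := by
  have hdegenerate : ∀ T ⊆ S.toFinset, T.Nonempty →
      ∃ u ∈ T, (T.filter ((fiveCycleGraph G).Adj u)).card ≤ 48 := fun T hT hne => by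
    have hTS : ↑T ⊆ S := fun u hu => Set.mem_toFinset.mp (hT hu)
    refine Finset.exists_le_of_sum_le hne ?_
    rw [Finset.sum_const, smul_eq_mul, mul_comm]
    exact sum_card_fiveCycleGraph_adj_le hG.2.1.1 hS hsat hdeg hTS
  obtain ⟨I, hIS, hI, hcard⟩ := exists_isIndepSet_of_forall_exists_degree_le 48 _ hdegenerate
  refine ⟨I, fun u hu => Set.mem_toFinset.mp (hIS hu), ?_, not_saturates_five_of_isIndepSet hI⟩
  rw [Set.ncard_eq_toFinset_card', Set.ncard_coe_finset, div_le_iff₀ (by norm_num)]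
  exact_mod_cast hcard.trans (by omega)

/-- Let `G` be a 4-connected planar triangulation and `S` an independent
set of vertices of degree at most 6 saturating no 4-cycle. Then there is `S' ⊆ S` of size
at least `|S|/541` saturating no 5-cycle of `G`. -/
theorem subset_saturating_no_five_cycle
    {V : Type} [Fintype V] (G : SimpleGraph V)
    (hG : IsPlanarTriangulation G) (h4 : KConnected 4 G)
    (S : Set V) (hS : IndepSet G S) (hdeg : ∀ u ∈ S, vdeg G u ≤ 6)
    (hsat : ¬ Saturates G S 4) :
    ∃ S' ⊆ S, (S.ncard : ℝ) / 541 ≤ (S'.ncard : ℝ) ∧ ¬ Saturates G S' 5 :=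
  subset_saturating_no_five_cycle_general G hG S hS hdeg hsat
end
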